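/- Let k ≥ 1, n = k+1, and α ∈ 𝓑. Then for each i with 1 ≤ i ≤ k+1, the multiset of leg lengths l_T(x) over cells x of p(T) with arm length a_T(x) = i−1 equals the disjoint union of the multiset of leg lengths l_D(x) over cells x of q(D) with arm length a_D(x) = i−1 and the multiset {0, 1, …, i−2} (which is empty when i = 1). -/

import Mathlib

/-- The skew diagram with rows `a,…,b`, where row `i` contains the cells
`(i,j)` for `lo i ≤ j ≤ hi i`. -/
def skewD (a b : ℕ) (lo hi : ℕ → ℕ) : Finset (ℕ × ℕ) :=
  (Finset.Icc a b).biUnion fun i => (Finset.Icc (lo i) (hi i)).image fun j => (i, j)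

/-- Arm length: number of cells of `G` in the same row, strictly to the right. -/
def arm (G : Finset (ℕ × ℕ)) (x : ℕ × ℕ) : ℕ :=
  (G.filter fun y => y.1 = x.1 ∧ x.2 < y.2).card

/-- Leg length: number of cells of `G` in the same column, strictly below
(rows are numbered bottom to top). -/
def leg (G : Finset (ℕ × ℕ)) (x : ℕ × ℕ) : ℕ :=
  (G.filter fun y => y.2 = x.2 ∧ y.1 < x.1).card

/-- Multiset of arm–leg pairs of the cells of `E`, computed in `G`. -/
def AL (G E : Finset (ℕ × ℕ)) : Multiset (ℕ × ℕ) :=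
  E.val.map fun x => (arm G x, leg G x)

/-- Multiset of hook lengths of `G`. -/
def hookMS (G : Finset (ℕ × ℕ)) : Multiset ℕ :=
  G.val.map fun x => arm G x + leg G x + 1

/-- The skew diagram `T`. -/
def TT (n k : ℕ) (α : ℕ → ℕ) : Finset (ℕ × ℕ) :=
  skewD 1 k (fun i => α 1 - α i + 1) (fun i => n + α 1 - α i)

/-- The skew diagram `V`. -/
def VV (n k : ℕ) (α : ℕ → ℕ) : Finset (ℕ × ℕ) :=
  skewD (k + 1) (2 * k) (fun i => n + α 1 - α (i - k) + 1) (fun _ => n + α 1)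

/-- The skew diagram `SQ = T ∪ V`. -/
def SQ (n k : ℕ) (α : ℕ → ℕ) : Finset (ℕ × ℕ) :=
  TT n k α ∪ VV n k α

/-- The `k × n` rectangle `R`. -/
def RR (n k : ℕ) : Finset (ℕ × ℕ) :=
  skewD 1 k (fun _ => 1) (fun _ => n)

/-- The Young diagram `D` of `α`. -/
def DD (k : ℕ) (α : ℕ → ℕ) : Finset (ℕ × ℕ) :=
  skewD 1 k (fun _ => 1) (fun i => α (k + 1 - i))

/-- The 180° rotation `T*` of `T`. -/
def Tstar (n k : ℕ) (α : ℕ → ℕ) : Finset (ℕ × ℕ) :=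
  skewD 1 k (fun i => α (k + 1 - i) - α k + 1) (fun i => n + α (k + 1 - i) - α k)

/-- `α` has Frobenius form `(λ₁,…,λ_m | λ₁−1,…,λ_m−1)` with
`k ≥ λ₁ > ⋯ > λ_m > 0`: equivalently `α_j = λ_j + j` for `1 ≤ j ≤ m`,
`α_j ≤ m` for `m < j ≤ k`, and the conjugate partition satisfies
`α′_j = λ_j + j − 1` for `1 ≤ j ≤ m`. -/
def FrobB (k : ℕ) (α : ℕ → ℕ) (m : ℕ) (lam : ℕ → ℕ) : Prop :=
  (∀ j, 1 ≤ j → j ≤ m → 0 < lam j ∧ lam j ≤ k) ∧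
  (∀ j j', 1 ≤ j → j < j' → j' ≤ m → lam j' < lam j) ∧
  (∀ j, 1 ≤ j → j ≤ m → α j = lam j + j) ∧
  (∀ j, m < j → j ≤ k → α j ≤ m) ∧
  (∀ j, 1 ≤ j → j ≤ m →
    ((Finset.Icc 1 k).filter fun i => j ≤ α i).card = lam j + j - 1)

/-- `α ∈ 𝓑`. -/
def memB (k : ℕ) (α : ℕ → ℕ) : Prop := ∃ m lam, FrobB k α m lam


/-!
Row `r` of `T`, resp. row `s` of `D`, has at most one cell of arm length `a = i - 1`, so both
multisets are indexed by rows: the leg lengths count the rows `r' < r` with `α r' ≤ α r + a`,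
resp. the rows `s' > s` with `α s ≤ α s' + a`. A multiset of naturals is determined by how many
of its elements are `≥ d`; after the shift `r = s + d` these counts differ by exactly `a - d`.
This rests on the numbers `β r = α r - r`: the integers strictly between `β t` and `β s`
(`s < t`) that are not `β`-values number `α s - α t`, and for `α ∈ 𝓑` the `β`-values contain,
for each `1 ≤ j ≤ k`, exactly one of `±j` (and never `0`).
-/

open Finset

section Generic

theorem lt_add_card_filter_Icc_iff_of_lower {lo hi x : ℕ} {p : ℕ → Prop} [DecidablePred p]
    (hp : ∀ y z, lo ≤ y → y ≤ z → z ≤ hi → p z → p y) (hlo : lo ≤ x) (hhi : x ≤ hi) :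
    p x ↔ x < lo + #((Icc lo hi).filter p) := by
  constructor
  · intro hx
    have hsub : Icc lo x ⊆ (Icc lo hi).filter p := fun y hy => by
      rw [mem_Icc] at hy
      exact mem_filter.2 ⟨mem_Icc.2 ⟨hy.1, hy.2.trans hhi⟩, hp y x hy.1 hy.2 hhi hx⟩
    have := card_le_card hsub
    rw [Nat.card_Icc] at this
    omega
  · intro hlt
    by_contra hx
    have hsub : (Icc lo hi).filter p ⊆ Ico lo x := fun y hy => by
      rw [mem_filter, mem_Icc] at hy
      refine mem_Ico.2 ⟨hy.1.1, lt_of_not_ge fun hxy => hx ?_⟩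
      exact hp x y hlo hxy hy.1.2 hy.2
    have := card_le_card hsub
    rw [Nat.card_Ico] at this
    omega

theorem lt_add_card_filter_Icc_iff_of_upper {lo hi x : ℕ} {p : ℕ → Prop} [DecidablePred p]
    (hp : ∀ y z, lo ≤ y → y ≤ z → z ≤ hi → p y → p z) (hlo : lo ≤ x) (hhi : x ≤ hi) :
    p x ↔ hi < x + #((Icc lo hi).filter p) := by
  have hnot := lt_add_card_filter_Icc_iff_of_lower (p := fun y => ¬ p y)
    (fun y z hy hyz hz hpz hpy => hpz (hp y z hy hyz hz hpy)) hlo hhi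
  have hsplit := card_filter_add_card_filter_not (s := Icc lo hi) p
  rw [Nat.card_Icc] at hsplit
  by_cases hx : p x
  · simp only [hx, not_true_eq_false, false_iff, not_lt, true_iff] at hnot ⊢
    omega
  · simp only [hx, not_false_eq_true, true_iff, false_iff, not_lt] at hnot ⊢
    omega

theorem Multiset.card_filter_le_eq_count_add (M : Multiset ℕ) (l : ℕ) :
    Multiset.card (M.filter (l ≤ ·)) = M.count l + Multiset.card (M.filter (l + 1 ≤ ·)) := by
  induction M using Multiset.induction_on with
  | empty => simp
  | cons x M ih =>
    simp only [Multiset.filter_cons, Multiset.count_cons]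
    split_ifs <;>
      simp only [Multiset.card_add, Multiset.card_singleton, Multiset.card_zero] <;> omega

theorem Multiset.eq_of_forall_card_filter_le_eq {M N : Multiset ℕ}
    (h : ∀ d, Multiset.card (M.filter (d ≤ ·)) = Multiset.card (N.filter (d ≤ ·))) : M = N := by
  ext l
  have hM := M.card_filter_le_eq_count_add l
  have hN := N.card_filter_le_eq_count_add l
  rw [h l, h (l + 1)] at hM
  omega

theorem Int.natAbs_injOn_of_forall_neg_not_mem {S : Finset ℤ} (hS : ∀ j ∈ S, -j ∉ S) :
    Set.InjOn Int.natAbs S := by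
  intro w hw w' hw' h
  rcases Int.natAbs_eq_natAbs_iff.1 h with h | rfl
  · exact h
  · exact absurd hw (hS _ hw')

end Generic

section SkewDiagram

variable {a b : ℕ} {lo hi : ℕ → ℕ}

theorem mem_skewD {r j : ℕ} :
    (r, j) ∈ skewD a b lo hi ↔ a ≤ r ∧ r ≤ b ∧ lo r ≤ j ∧ j ≤ hi r := by
  simp only [skewD, mem_biUnion, mem_Icc, mem_image, Prod.mk.injEq]
  constructor
  · rintro ⟨r, hr, j, hj, rfl, rfl⟩
    exact ⟨hr.1, hr.2, hj⟩
  · rintro ⟨h1, h2, h3⟩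
    exact ⟨r, ⟨h1, h2⟩, j, h3, rfl, rfl⟩

theorem arm_skewD {r j : ℕ} (hmem : (r, j) ∈ skewD a b lo hi) :
    arm (skewD a b lo hi) (r, j) = hi r - j := by
  obtain ⟨hr1, hr2, hr3, -⟩ := mem_skewD.1 hmem
  have hrow : (skewD a b lo hi).filter (fun y => y.1 = r ∧ j < y.2) =
      (Ioc j (hi r)).image fun j' => (r, j') := by
    ext ⟨r', j'⟩
    simp only [mem_filter, mem_skewD, mem_image, mem_Ioc, Prod.mk.injEq]
    constructor
    · rintro ⟨⟨-, -, -, h⟩, rfl, hj⟩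
      exact ⟨j', ⟨hj, h⟩, rfl, rfl⟩
    · rintro ⟨j', hj, rfl, rfl⟩
      exact ⟨⟨hr1, hr2, by omega, hj.2⟩, rfl, hj.1⟩
  rw [arm, hrow, card_image_of_injective _ (Prod.mk_right_injective r), Nat.card_Ioc]

theorem leg_skewD (r j : ℕ) :
    leg (skewD a b lo hi) (r, j) =
      #((Icc a b).filter fun r' => r' < r ∧ lo r' ≤ j ∧ j ≤ hi r') := by
  have hcol : (skewD a b lo hi).filter (fun y => y.2 = j ∧ y.1 < r) =
      ((Icc a b).filter fun r' => r' < r ∧ lo r' ≤ j ∧ j ≤ hi r').image fun r' => (r', j) := by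
    ext ⟨r', j'⟩
    simp only [mem_filter, mem_skewD, mem_image, mem_Icc, Prod.mk.injEq]
    constructor
    · rintro ⟨⟨h1, h2, h3, h4⟩, rfl, hr⟩
      exact ⟨r', ⟨⟨h1, h2⟩, hr, h3, h4⟩, rfl, rfl⟩
    · rintro ⟨r', ⟨⟨h1, h2⟩, hr, h3, h4⟩, rfl, rfl⟩
      exact ⟨⟨h1, h2, h3, h4⟩, rfl, hr⟩
  rw [leg, hcol, card_image_of_injective _ (Prod.mk_left_injective j)]

end SkewDiagram

def beta (α : ℕ → ℕ) (r : ℕ) : ℤ := α r - r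

def betaSet (k : ℕ) (α : ℕ → ℕ) : Finset ℤ := (Icc 1 k).image (beta α)

def BetaBalanced (k : ℕ) (α : ℕ → ℕ) : Prop :=
  (∀ j ∈ betaSet k α, -j ∉ betaSet k α) ∧ (betaSet k α).image Int.natAbs = Icc 1 k

section Beta

variable {k : ℕ} {α : ℕ → ℕ}

theorem beta_strictAntiOn (hmono : ∀ i j, 1 ≤ i → i ≤ j → j ≤ k → α j ≤ α i) :
    StrictAntiOn (beta α) (Set.Icc 1 k) := by
  intro p hp q hq hpq
  have := hmono p q hp.1 hpq.le hq.2
  simp only [beta]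
  omega

theorem card_betaSet (hmono : ∀ i j, 1 ≤ i → i ≤ j → j ≤ k → α j ≤ α i) :
    #(betaSet k α) = k := by
  rw [betaSet, card_image_of_injOn (by simpa using (beta_strictAntiOn hmono).injOn),
    Nat.card_Icc, Nat.add_sub_cancel]

theorem card_Ioo_beta_sdiff_betaSet (hmono : ∀ i j, 1 ≤ i → i ≤ j → j ≤ k → α j ≤ α i)
    {s t : ℕ} (hs : 1 ≤ s) (hst : s < t) (htk : t ≤ k) :
    #(Ioo (beta α t) (beta α s) \ betaSet k α) + α t = α s := by
  have hanti := beta_strictAntiOn hmono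
  have hinter : betaSet k α ∩ Ioo (beta α t) (beta α s) = (Ioo s t).image (beta α) := by
    ext w
    simp only [betaSet, mem_inter, mem_image, mem_Icc, mem_Ioo]
    constructor
    · rintro ⟨⟨ρ, hρ, rfl⟩, hlo, hhi⟩
      rw [hanti.lt_iff_gt hρ ⟨hs, by omega⟩] at hhi
      rw [hanti.lt_iff_gt ⟨by omega, htk⟩ hρ] at hlo
      exact ⟨ρ, ⟨hhi, hlo⟩, rfl⟩
    · rintro ⟨ρ, hρ, rfl⟩
      have hρ' : ρ ∈ Set.Icc 1 k := ⟨by omega, by omega⟩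
      exact ⟨⟨ρ, hρ', rfl⟩, hanti ⟨hρ'.1, by omega⟩ ⟨by omega, htk⟩ hρ.2,
        hanti ⟨hs, by omega⟩ hρ' hρ.1⟩
  have hinj : Set.InjOn (beta α) (Ioo s t) :=
    hanti.injOn.mono fun ρ hρ => by
      rw [coe_Ioo, Set.mem_Ioo] at hρ
      exact Set.mem_Icc.2 ⟨by omega, by omega⟩
  rw [card_sdiff, hinter, card_image_of_injOn hinj, Int.card_Ioo, Nat.card_Ioo]
  have := hmono s t hs hst.le htk
  simp only [beta]
  omega

end Beta

namespace FrobB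

variable {k : ℕ} {α : ℕ → ℕ} {m : ℕ} {lam : ℕ → ℕ}

theorem le_of_le_alpha (hF : FrobB k α m lam) {r : ℕ} (hrk : r ≤ k) (h : r ≤ α r) :
    r ≤ m := by
  by_contra hrm
  have := hF.2.2.2.1 r (by omega) hrk
  omega

theorem alpha_add_lam_ne (hF : FrobB k α m lam)
    (hmono : ∀ i j, 1 ≤ i → i ≤ j → j ≤ k → α j ≤ α i)
    {c ρ : ℕ} (hc : 1 ≤ c) (hcm : c ≤ m) (hρ : 1 ≤ ρ) (hρk : ρ ≤ k) :
    α ρ + lam c ≠ ρ := by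
  -- `c ≤ α ρ ↔ ρ ≤ α'_c = lam c + c - 1`; either side contradicts `α ρ = ρ - lam c`.
  have hconj := lt_add_card_filter_Icc_iff_of_lower (p := fun r => c ≤ α r)
    (fun y z hy hyz hz h => h.trans (hmono y z hy hyz hz)) hρ hρk
  rw [hF.2.2.2.2 c hc hcm] at hconj
  have := (hF.1 c hc hcm).1
  omega

theorem beta_eq_lam (hF : FrobB k α m lam) {r : ℕ} (hr : 1 ≤ r) (hrk : r ≤ k)
    (h : 0 ≤ beta α r) : r ≤ m ∧ beta α r = lam r := by
  have hrm := hF.le_of_le_alpha hrk (by simp only [beta] at h; omega)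
  have := hF.2.2.1 r hr hrm
  exact ⟨hrm, by simp only [beta]; omega⟩

theorem neg_not_mem_betaSet (hF : FrobB k α m lam)
    (hmono : ∀ i j, 1 ≤ i → i ≤ j → j ≤ k → α j ≤ α i) {j : ℤ} (hj : j ∈ betaSet k α) :
    -j ∉ betaSet k α := by
  have key : ∀ r ρ, 1 ≤ r → r ≤ k → 1 ≤ ρ → ρ ≤ k → 0 ≤ beta α r →
      beta α ρ ≠ -beta α r := by
    intro r ρ hr hrk hρ hρk h0 heq
    obtain ⟨hrm, hlam⟩ := hF.beta_eq_lam hr hrk h0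
    have := hF.alpha_add_lam_ne hmono hr hrm hρ hρk
    simp only [beta] at hlam heq
    omega
  intro hneg
  simp only [betaSet, mem_image, mem_Icc] at hj hneg
  obtain ⟨r, ⟨hr, hrk⟩, rfl⟩ := hj
  obtain ⟨ρ, ⟨hρ, hρk⟩, hρeq⟩ := hneg
  rcases le_total 0 (beta α r) with h0 | h0
  · exact key r ρ hr hrk hρ hρk h0 hρeq
  · exact key ρ r hρ hρk hr hrk (by omega) (by omega)

theorem natAbs_beta_mem_Icc (hF : FrobB k α m lam) {r : ℕ} (hr : 1 ≤ r) (hrk : r ≤ k) :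
    (beta α r).natAbs ∈ Icc 1 k := by
  rw [mem_Icc]
  rcases le_or_gt 0 (beta α r) with h0 | h0
  · obtain ⟨hrm, hlam⟩ := hF.beta_eq_lam hr hrk h0
    have := hF.1 r hr hrm
    omega
  · simp only [beta] at h0 ⊢
    omega

/-- Pigeonhole: the `k` values `α r - r` lie in `[-k, k] \ {0}` and never contain
both `j` and `-j`. -/
theorem betaBalanced (hF : FrobB k α m lam)
    (hmono : ∀ i j, 1 ≤ i → i ≤ j → j ≤ k → α j ≤ α i) : BetaBalanced k α := by
  have hneg : ∀ j ∈ betaSet k α, -j ∉ betaSet k α := fun _ hj => hF.neg_not_mem_betaSet hmono hj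
  refine ⟨hneg, eq_of_subset_of_card_le ?_ ?_⟩
  · intro x hx
    simp only [betaSet, mem_image, mem_Icc] at hx
    obtain ⟨_, ⟨r, ⟨hr, hrk⟩, rfl⟩, rfl⟩ := hx
    exact hF.natAbs_beta_mem_Icc hr hrk
  · rw [card_image_of_injOn (Int.natAbs_injOn_of_forall_neg_not_mem hneg), card_betaSet hmono,
      Nat.card_Icc, Nat.add_sub_cancel]

end FrobB

namespace BetaBalanced

variable {k : ℕ} {α : ℕ → ℕ}

theorem mem_or_neg_mem (hβ : BetaBalanced k α) {j : ℕ} (hj : j ∈ Icc 1 k) :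
    (j : ℤ) ∈ betaSet k α ∨ -(j : ℤ) ∈ betaSet k α := by
  rw [← hβ.2, mem_image] at hj
  obtain ⟨w, hw, rfl⟩ := hj
  rcases Int.natAbs_eq w with h | h
  · exact .inl (h ▸ hw)
  · exact .inr (by rw [← h]; exact hw)

theorem card_filter_natAbs_le (hβ : BetaBalanced k α) {a : ℕ} (ha : a ≤ k) :
    #((betaSet k α).filter fun w => w.natAbs ≤ a) = a := by
  have himage : ((betaSet k α).filter fun w => w.natAbs ≤ a).image Int.natAbs = Icc 1 a := by
    rw [← filter_image (p := (· ≤ a)), hβ.2]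
    ext j
    simp only [mem_filter, mem_Icc]
    omega
  rw [← card_image_of_injOn
    ((Int.natAbs_injOn_of_forall_neg_not_mem hβ.1).mono (filter_subset _ _)), himage,
    Nat.card_Icc, Nat.add_sub_cancel]

variable (hβ : BetaBalanced k α) (hmono : ∀ i j, 1 ≤ i → i ≤ j → j ≤ k → α j ≤ α i)
include hβ hmono

/-- The gaps of `betaSet` between `β t ≥ -a` and `β s ≤ a` lie in `(-a, a)`, and of
`±j` at most one is a gap, so there are at most `a` of them. -/
theorem alpha_le_alpha_add {a s t : ℕ} (ha : a ≤ k) (hs : 1 ≤ s) (hst : s < t) (htk : t ≤ k)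
    (hβs : beta α s ≤ a) (hβt : -(a : ℤ) ≤ beta α t) : α s ≤ α t + a := by
  have hcard := card_Ioo_beta_sdiff_betaSet hmono hs hst htk
  suffices #(Ioo (beta α t) (beta α s) \ betaSet k α) ≤ #(range a) by
    rw [card_range] at this
    omega
  refine card_le_card_of_injOn Int.natAbs (fun w hw => ?_) (fun w hw w' hw' h => ?_)
  · rw [mem_coe, mem_sdiff, mem_Ioo] at hw
    rw [mem_coe, mem_range]
    omega
  · rw [mem_coe, mem_sdiff, mem_Ioo] at hw hw'
    have hout : ∀ x ∈ betaSet k α, x ≠ w ∧ x ≠ w' :=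
      fun x hx => ⟨fun h => hw.2 (h ▸ hx), fun h => hw'.2 (h ▸ hx)⟩
    by_contra hne
    have hj : w.natAbs ∈ Icc 1 k := by rw [mem_Icc]; omega
    rcases hβ.mem_or_neg_mem hj with hmem | hmem <;> have := hout _ hmem <;> omega

/-- When `β s > a` and `β t < -a`, for each `0 ≤ j ≤ a` one of `±j` is a gap of
`betaSet` between them, so there are more than `a` gaps. -/
theorem alpha_add_lt_alpha {a s t : ℕ} (hs : 1 ≤ s) (hst : s < t) (htk : t ≤ k)
    (hβs : (a : ℤ) < beta α s) (hβt : beta α t < -(a : ℤ)) : α t + a < α s := by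
  have hcard := card_Ioo_beta_sdiff_betaSet hmono hs hst htk
  let gap : ℕ → ℤ := fun j => if (j : ℤ) ∈ betaSet k α then -(j : ℤ) else j
  have hgap : ∀ j, (gap j).natAbs = j := fun j => by
    simp only [gap]
    split_ifs <;> simp
  suffices #(range (a + 1)) ≤ #(Ioo (beta α t) (beta α s) \ betaSet k α) by
    rw [card_range] at this
    omega
  refine card_le_card_of_injOn gap (fun j hj => ?_) (fun j _ j' _ h => ?_)
  · rw [mem_coe, mem_range] at hj
    rw [mem_coe, mem_sdiff, mem_Ioo]
    simp only [gap]
    split_ifs with hmem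
    · exact ⟨⟨by omega, by omega⟩, hβ.1 _ hmem⟩
    · exact ⟨⟨by omega, by omega⟩, hmem⟩
  · rw [← hgap j, ← hgap j', h]

end BetaBalanced

/-- Rows `r` of `T` whose cell of arm length `a` lies in `p(T)`; that cell is
`(r, k + 1 - a + α₁ - α_r)` and its leg length in `T` is `pLeg α a r`. -/
def pRows (k : ℕ) (α : ℕ → ℕ) (a : ℕ) : Finset ℕ := (Icc 1 k).filter fun r => r ≤ α r + a

def pLeg (α : ℕ → ℕ) (a r : ℕ) : ℕ := #((Icc 1 (r - 1)).filter fun r' => α r' ≤ α r + a)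

/-- Rows `s` of `α` whose cell of arm length `a` in `D` lies in `q(D)`; that cell is
`(k + 1 - s, α_s - a)` and its leg length in `D` is `qLeg k α a s`. -/
def qRows (k : ℕ) (α : ℕ → ℕ) (a : ℕ) : Finset ℕ := (Icc 1 k).filter fun s => s + a < α s

def qLeg (k : ℕ) (α : ℕ → ℕ) (a s : ℕ) : ℕ := #((Icc (s + 1) k).filter fun s' => α s ≤ α s' + a)

section Rows

variable {k : ℕ} {α : ℕ → ℕ} {a : ℕ} (hmono : ∀ i j, 1 ≤ i → i ≤ j → j ≤ k → α j ≤ α i)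
include hmono

theorem le_alpha_add_iff_le_card_pRows {r : ℕ} (hr : 1 ≤ r) (hrk : r ≤ k) :
    r ≤ α r + a ↔ r ≤ #(pRows k α a) :=
  (lt_add_card_filter_Icc_iff_of_lower (p := fun r => r ≤ α r + a)
    (fun y z hy hyz hz h => by have := hmono y z hy hyz hz; omega) hr hrk).trans
    (by rw [pRows]; omega)

theorem add_lt_alpha_iff_le_card_qRows {s : ℕ} (hs : 1 ≤ s) (hsk : s ≤ k) :
    s + a < α s ↔ s ≤ #(qRows k α a) :=
  (lt_add_card_filter_Icc_iff_of_lower (p := fun s => s + a < α s)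
    (fun y z hy hyz hz h => by have := hmono y z hy hyz hz; omega) hs hsk).trans
    (by rw [qRows]; omega)

theorem le_pLeg_iff {d r : ℕ} (hd : 1 ≤ d) (hrk : r ≤ k) :
    d ≤ pLeg α a r ↔ d < r ∧ α (r - d) ≤ α r + a := by
  rcases lt_or_ge d r with hdr | hdr
  · rw [lt_add_card_filter_Icc_iff_of_upper (p := fun r' => α r' ≤ α r + a)
      (fun y z hy hyz hz h => by have := hmono y z hy hyz (by omega); omega)
      (by omega : 1 ≤ r - d) (by omega : r - d ≤ r - 1), pLeg]
    omega
  · have := card_filter_le (Icc 1 (r - 1)) fun r' => α r' ≤ α r + a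
    rw [Nat.card_Icc] at this
    simp only [pLeg]
    omega

theorem le_qLeg_iff {d s : ℕ} (hd : 1 ≤ d) :
    d ≤ qLeg k α a s ↔ s + d ≤ k ∧ α s ≤ α (s + d) + a := by
  rcases le_or_gt (s + d) k with hsd | hsd
  · rw [lt_add_card_filter_Icc_iff_of_lower (p := fun s' => α s ≤ α s' + a)
      (fun y z hy hyz hz h => by have := hmono y z (by omega) hyz hz; omega)
      (by omega : s + 1 ≤ s + d) hsd, qLeg]
    omega
  · have := card_filter_le (Icc (s + 1) k) fun s' => α s ≤ α s' + a
    rw [Nat.card_Icc] at this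
    simp only [qLeg]
    omega

theorem card_pRows (hβ : BetaBalanced k α) (ha : a ≤ k) :
    #(pRows k α a) = #(qRows k α a) + a := by
  have hsplit := card_filter_add_card_filter_not (s := pRows k α a) fun r => r + a < α r
  have hq : (pRows k α a).filter (fun r => r + a < α r) = qRows k α a := by
    ext r
    simp only [pRows, qRows, mem_filter, mem_Icc]
    omega
  have hmid : (pRows k α a).filter (fun r => ¬ r + a < α r) =
      (Icc 1 k).filter fun r => (beta α r).natAbs ≤ a := by
    ext r
    simp only [pRows, mem_filter, mem_Icc]
    simp only [beta]
    omega
  have hcard := hβ.card_filter_natAbs_le ha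
  rw [betaSet, filter_image, card_image_of_injOn ((beta_strictAntiOn hmono).injOn.mono
    (by rw [← coe_Icc]; exact coe_subset.2 (filter_subset _ _)))] at hcard
  rw [hq, hmid, hcard] at hsplit
  omega

end Rows

section Counting

variable {k : ℕ} {α : ℕ → ℕ} {a : ℕ} (hmono : ∀ i j, 1 ≤ i → i ≤ j → j ≤ k → α j ≤ α i)
include hmono

theorem card_filter_le_pLeg_eq_card_filter_Icc {d : ℕ} (hd : 1 ≤ d) :
    #((pRows k α a).filter fun r => d ≤ pLeg α a r) =
      #((Icc 1 k).filter fun s => s + d ≤ #(pRows k α a) ∧ α s ≤ α (s + d) + a) := by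
  refine card_nbij' (· - d) (· + d) (fun r hr => ?_) (fun s hs => ?_) (fun r hr => ?_)
    (fun s _ => Nat.add_sub_cancel s d)
  · rw [mem_coe, mem_filter, pRows, mem_filter, mem_Icc] at hr
    obtain ⟨⟨⟨hr1, hrk⟩, hrα⟩, hleg⟩ := hr
    obtain ⟨hdr, hα⟩ := (le_pLeg_iff hmono hd hrk).1 hleg
    have hrR := (le_alpha_add_iff_le_card_pRows hmono hr1 hrk).1 hrα
    dsimp only
    rw [mem_coe, mem_filter, mem_Icc, Nat.sub_add_cancel hdr.le]
    exact ⟨⟨by omega, by omega⟩, hrR, hα⟩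
  · rw [mem_coe, mem_filter, mem_Icc] at hs
    obtain ⟨⟨hs1, -⟩, hsR, hα⟩ := hs
    have hRk : #(pRows k α a) ≤ k := (card_filter_le _ _).trans (by simp)
    dsimp only
    rw [mem_coe, mem_filter, pRows, mem_filter, mem_Icc]
    have hsdp := (le_alpha_add_iff_le_card_pRows hmono (by omega) (by omega)).2 hsR
    refine ⟨⟨⟨by omega, by omega⟩, hsdp⟩, ?_⟩
    rw [le_pLeg_iff hmono hd (by omega), Nat.add_sub_cancel]
    exact ⟨by omega, hα⟩
  · rw [mem_coe, mem_filter] at hr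
    have := (le_pLeg_iff hmono hd (mem_Icc.1 (mem_filter.1 hr.1).1).2).1 hr.2
    exact Nat.sub_add_cancel this.1.le

theorem card_filter_le_pLeg_eq_add (hβ : BetaBalanced k α) (ha : a ≤ k) (d : ℕ) :
    #((pRows k α a).filter fun r => d ≤ pLeg α a r) =
      #((qRows k α a).filter fun s => d ≤ qLeg k α a s) + (a - d) := by
  have hRt := card_pRows hmono hβ ha
  have hRk : #(pRows k α a) ≤ k := (card_filter_le _ _).trans (by simp)
  rcases Nat.eq_zero_or_pos d with rfl | hd
  · simpa using hRt
  set R := #(pRows k α a)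
  set t := #(qRows k α a)
  set X := (Icc 1 k).filter fun s => s + d ≤ R ∧ α s ≤ α (s + d) + a
  -- Split `X` at `t`: for `s ≤ t` the condition `s + d ≤ R` is implied by the others, and
  -- for `t < s ≤ R - d` the condition on `α` holds automatically.
  have hsplit := card_filter_add_card_filter_not (s := X) (· ≤ t)
  have hlow : X.filter (· ≤ t) = (qRows k α a).filter fun s => d ≤ qLeg k α a s := by
    ext s
    simp only [X, qRows, mem_filter, mem_Icc]
    constructor
    · rintro ⟨⟨⟨hs1, hsk⟩, hsR, hα⟩, hst⟩
      exact ⟨⟨⟨hs1, hsk⟩, (add_lt_alpha_iff_le_card_qRows hmono hs1 hsk).2 hst⟩,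
        (le_qLeg_iff hmono hd).2 ⟨by omega, hα⟩⟩
    · rintro ⟨⟨⟨hs1, hsk⟩, hsq⟩, hleg⟩
      obtain ⟨hsdk, hα⟩ := (le_qLeg_iff hmono hd).1 hleg
      refine ⟨⟨⟨hs1, hsk⟩, ?_, hα⟩, (add_lt_alpha_iff_le_card_qRows hmono hs1 hsk).1 hsq⟩
      by_contra hsR
      have hout := (le_alpha_add_iff_le_card_pRows hmono (by omega) hsdk).not.2 (by omega)
      have := hβ.alpha_add_lt_alpha hmono (a := a) hs1 (by omega : s < s + d) hsdk
        (by simp only [beta]; omega) (by simp only [beta]; omega)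
      omega
  have hhigh : X.filter (fun s => ¬ s ≤ t) = Ioc t (R - d) := by
    ext s
    simp only [X, mem_filter, mem_Icc, mem_Ioc]
    constructor
    · rintro ⟨⟨-, hsR, -⟩, hst⟩
      omega
    · rintro ⟨hts, hsR⟩
      have hin := (le_alpha_add_iff_le_card_pRows hmono (by omega) (by omega)).2
        (by omega : s + d ≤ R)
      have hout := (add_lt_alpha_iff_le_card_qRows hmono (by omega) (by omega)).not.2
        (by omega : ¬ s ≤ t)
      have := hβ.alpha_le_alpha_add hmono ha (by omega) (by omega : s < s + d)
        (by omega) (by simp only [beta]; omega) (by simp only [beta]; omega)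
      exact ⟨⟨⟨by omega, by omega⟩, by omega, this⟩, by omega⟩
  rw [card_filter_le_pLeg_eq_card_filter_Icc hmono hd, ← hsplit, hlow, hhigh, Nat.card_Ioc]
  omega

theorem map_pLeg_eq_map_qLeg_add_range (hβ : BetaBalanced k α) (ha : a ≤ k) :
    (pRows k α a).val.map (pLeg α a) =
      (qRows k α a).val.map (qLeg k α a) + Multiset.range a := by
  refine Multiset.eq_of_forall_card_filter_le_eq fun d => ?_
  have hrange : (range a).filter (d ≤ ·) = Ico d a := by
    ext x
    simp only [mem_filter, mem_range, mem_Ico]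
    omega
  rw [Multiset.filter_add, Multiset.card_add, ← range_val, ← filter_val, hrange,
    card_val, Nat.card_Ico, Multiset.filter_map, Multiset.filter_map, Multiset.card_map,
    Multiset.card_map]
  exact card_filter_le_pLeg_eq_add hmono hβ ha d

end Counting

section Diagrams

variable {k : ℕ} {α : ℕ → ℕ} {a : ℕ}

theorem filter_TT_eq (hmono : ∀ i j, 1 ≤ i → i ≤ j → j ≤ k → α j ≤ α i) (ha : a ≤ k) :
    (TT (k + 1) k α).filter (fun x => x.1 + x.2 ≤ k + 1 + α 1 ∧ arm (TT (k + 1) k α) x = a) =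
      (pRows k α a).image fun r => (r, k + 1 - a + (α 1 - α r)) := by
  unfold TT
  ext ⟨r, j⟩
  simp only [mem_filter, mem_image, pRows, mem_Icc, Prod.mk.injEq]
  constructor
  · rintro ⟨hmem, hdiag, harm⟩
    rw [arm_skewD hmem] at harm
    obtain ⟨h1, h2, -, h4⟩ := mem_skewD.1 hmem
    have := hmono 1 r le_rfl h1 h2
    exact ⟨r, ⟨⟨h1, h2⟩, by omega⟩, rfl, by omega⟩
  · rintro ⟨r, ⟨⟨h1, h2⟩, hr⟩, rfl, rfl⟩
    have := hmono 1 r le_rfl h1 h2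
    have hmem : (r, k + 1 - a + (α 1 - α r)) ∈
        skewD 1 k (fun i => α 1 - α i + 1) (fun i => k + 1 + α 1 - α i) :=
      mem_skewD.2 ⟨h1, h2, by omega, by omega⟩
    refine ⟨hmem, by omega, ?_⟩
    rw [arm_skewD hmem]
    omega

theorem leg_TT (hmono : ∀ i j, 1 ≤ i → i ≤ j → j ≤ k → α j ≤ α i) {r : ℕ} (ha : a ≤ k)
    (hr : r ∈ pRows k α a) :
    leg (TT (k + 1) k α) (r, k + 1 - a + (α 1 - α r)) = pLeg α a r := by
  rw [pRows, mem_filter, mem_Icc] at hr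
  rw [TT, leg_skewD, pLeg]
  congr 1
  ext r'
  simp only [mem_filter, mem_Icc]
  constructor
  · rintro ⟨⟨h1, h2⟩, hr', -, h4⟩
    have := hmono 1 r' le_rfl h1 h2
    exact ⟨⟨h1, by omega⟩, by omega⟩
  · rintro ⟨⟨h1, h2⟩, h3⟩
    have := hmono 1 r' le_rfl h1 (by omega)
    have := hmono r' r h1 (by omega) hr.1.2
    exact ⟨⟨h1, by omega⟩, by omega, by omega, by omega⟩

theorem map_leg_TT (hmono : ∀ i j, 1 ≤ i → i ≤ j → j ≤ k → α j ≤ α i) (ha : a ≤ k) :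
    ((TT (k + 1) k α).filter fun x =>
        x.1 + x.2 ≤ k + 1 + α 1 ∧ arm (TT (k + 1) k α) x = a).val.map
      (leg (TT (k + 1) k α)) = (pRows k α a).val.map (pLeg α a) := by
  rw [filter_TT_eq hmono ha, image_val_of_injOn fun r _ r' _ h => (Prod.mk.inj h).1,
    Multiset.map_map]
  exact Multiset.map_congr rfl fun r hr => leg_TT hmono ha hr

theorem filter_DD_eq :
    (DD k α).filter (fun x => k + 1 < x.1 + x.2 ∧ arm (DD k α) x = a) =
      (qRows k α a).image fun s => (k + 1 - s, α s - a) := by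
  unfold DD
  ext ⟨r, j⟩
  simp only [mem_filter, mem_image, qRows, mem_Icc, Prod.mk.injEq]
  constructor
  · rintro ⟨hmem, hdiag, harm⟩
    rw [arm_skewD hmem] at harm
    obtain ⟨h1, h2, h3, h4⟩ := mem_skewD.1 hmem
    exact ⟨k + 1 - r, ⟨⟨by omega, by omega⟩, by omega⟩, by omega, by omega⟩
  · rintro ⟨s, ⟨⟨h1, h2⟩, hs⟩, rfl, rfl⟩
    have hrow : k + 1 - (k + 1 - s) = s := by omega
    have hmem : (k + 1 - s, α s - a) ∈ skewD 1 k (fun _ => 1) (fun i => α (k + 1 - i)) :=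
      mem_skewD.2 ⟨by omega, by omega, by omega, by rw [hrow]; omega⟩
    refine ⟨hmem, by omega, ?_⟩
    rw [arm_skewD hmem, hrow]
    omega

theorem leg_DD {s : ℕ} (hs : s ∈ qRows k α a) :
    leg (DD k α) (k + 1 - s, α s - a) = qLeg k α a s := by
  rw [qRows, mem_filter, mem_Icc] at hs
  rw [DD, leg_skewD, qLeg]
  refine card_nbij' (k + 1 - ·) (k + 1 - ·) (fun r hr => ?_) (fun s' hs' => ?_)
    (fun r hr => ?_) (fun s' hs' => ?_)
  · rw [mem_coe, mem_filter, mem_Icc] at hr ⊢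
    dsimp only
    omega
  · rw [mem_coe, mem_filter, mem_Icc] at hs' ⊢
    have hrow : k + 1 - (k + 1 - s') = s' := by omega
    dsimp only
    rw [hrow]
    omega
  · rw [mem_coe, mem_filter, mem_Icc] at hr
    dsimp only
    omega
  · rw [mem_coe, mem_filter, mem_Icc] at hs'
    dsimp only
    omega

theorem map_leg_DD :
    ((DD k α).filter fun x => k + 1 < x.1 + x.2 ∧ arm (DD k α) x = a).val.map (leg (DD k α)) =
      (qRows k α a).val.map (qLeg k α a) := by
  rw [filter_DD_eq, image_val_of_injOn fun s hs s' hs' h => ?_, Multiset.map_map]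
  · exact Multiset.map_congr rfl fun s hs => leg_DD hs
  · rw [mem_coe, qRows, mem_filter, mem_Icc] at hs hs'
    have := (Prod.mk.inj h).1
    omega

end Diagrams

theorem legs_pT_eq_legs_qD_union_range_general (k : ℕ) (α : ℕ → ℕ)
    (hmono : ∀ i j, 1 ≤ i → i ≤ j → j ≤ k → α j ≤ α i)
    (hB : memB k α) (i : ℕ) (hik : i ≤ k + 1) :
    (((TT (k + 1) k α).filter fun x =>
        x.1 + x.2 ≤ k + 1 + α 1 ∧ arm (TT (k + 1) k α) x = i - 1).val.map
      fun x => leg (TT (k + 1) k α) x) =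
    (((DD k α).filter fun x =>
        k + 1 < x.1 + x.2 ∧ arm (DD k α) x = i - 1).val.map
      fun x => leg (DD k α) x) + Multiset.range (i - 1) := by
  obtain ⟨m, lam, hF⟩ := hB
  rw [map_leg_TT hmono (by omega), map_leg_DD]
  exact map_pLeg_eq_map_qLeg_add_range hmono (hF.betaBalanced hmono) (by omega)

/-- For `n = k+1` and `α ∈ 𝓑`: the multiset of leg lengths of the cells of
`p(T)` with arm length `i−1` equals the disjoint union of the multiset of leg
lengths of the cells of `q(D)` with arm length `i−1` and `{0, 1, …, i−2}`. -/
theorem legs_pT_eq_legs_qD_union_range (k : ℕ) (α : ℕ → ℕ) (hk : 0 < k)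
    (hα1 : α 1 ≤ k + 1) (hmono : ∀ i j, 1 ≤ i → i ≤ j → j ≤ k → α j ≤ α i)
    (hB : memB k α) (i : ℕ) (hi1 : 1 ≤ i) (hik : i ≤ k + 1) :
    (((TT (k + 1) k α).filter fun x =>
        x.1 + x.2 ≤ k + 1 + α 1 ∧ arm (TT (k + 1) k α) x = i - 1).val.map
      fun x => leg (TT (k + 1) k α) x) =
    (((DD k α).filter fun x =>
        k + 1 < x.1 + x.2 ∧ arm (DD k α) x = i - 1).val.map
      fun x => leg (DD k α) x) + Multiset.range (i - 1) :=
  legs_pT_eq_legs_qD_union_range_general k α hmono hB i hik
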